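/- arXiv:1708.09686 — 2 statements merged into one kernel-verified Lean document; each statement's English description precedes it below -/
import Mathlib

section
/- Let G be a connected graph and B, B' disjoint bicliques of G such that some edge e of G has one endpoint in B and the other in B'. If B_1 is a biclique containing both endpoints of e, then there exists a biclique B_2, different from B, B' and B_1, such that B_2 intersects each of B, B' and B_1. -/
open SimpleGraph

variable {V : Type*}

/-- `S` is the vertex set of an induced complete bipartite subgraph of `G`. -/
def IsCompleteBipartiteSet (G : SimpleGraph V) (S : Set V) : Prop :=
  ∃ X Y : Set V, X.Nonempty ∧ Y.Nonempty ∧ S = X ∪ Y ∧ Disjoint X Y ∧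
    ∀ a ∈ S, ∀ b ∈ S, (G.Adj a b ↔ ((a ∈ X ∧ b ∈ Y) ∨ (a ∈ Y ∧ b ∈ X)))

/-- A biclique of `G`: a maximal induced complete bipartite subgraph,
identified with its vertex set. -/
def IsBiclique (G : SimpleGraph V) (S : Set V) : Prop :=
  IsCompleteBipartiteSet G S ∧
    ∀ T : Set V, IsCompleteBipartiteSet G T → S ⊆ T → T = S

/-- The biclique graph `KB(G)`: the intersection graph of the bicliques of `G`. -/
def KB (G : SimpleGraph V) : SimpleGraph {S : Set V // IsBiclique G S} where
  Adj A B := A ≠ B ∧ (A.1 ∩ B.1).Nonempty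
  symm := by
    constructor
    intro A B h
    exact ⟨Ne.symm h.1, by rw [Set.inter_comm]; exact h.2⟩
  loopless := by
    constructor
    intro A h
    exact h.1 rfl

/-- The distance between two bicliques (vertex sets) of `G`:
`min { d_G(b,b') : b ∈ B, b' ∈ B' }`. -/
noncomputable def bicliqueDist (G : SimpleGraph V) (B B' : Set V) : ℕ :=
  sInf {k : ℕ | ∃ b ∈ B, ∃ b' ∈ B', G.dist b b' = k}

/-- An edge is a complete bipartite set. -/
lemma cbs_pair (G : SimpleGraph V) {x y : V} (h : G.Adj x y) :
    IsCompleteBipartiteSet G {x, y} := by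
  have h1 := h.ne; have h2 := h.ne.symm; have h3 := h.symm
  refine ⟨{x}, {y}, by simp, by simp, by rw [Set.singleton_union], by simpa using h.ne, ?_⟩
  intro p hp q hq
  rcases hp with rfl | rfl <;> rcases hq with rfl | rfl <;> simp_all

/-- A cherry is a complete bipartite set. -/
lemma cbs_triple (G : SimpleGraph V) {a b c : V} (hab : G.Adj a b) (hac : G.Adj a c)
    (hbc : ¬ G.Adj b c) : IsCompleteBipartiteSet G {a, b, c} := by
  have h1 := hab.ne; have h2 := hac.ne; have h3 := hab.symm; have h4 := hac.symm
  have h5 : ¬ G.Adj c b := fun h => hbc h.symm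
  have h6 := hab.ne.symm; have h7 := hac.ne.symm
  refine ⟨{a}, {b, c}, by simp, by simp, by rw [Set.singleton_union], ?_, ?_⟩
  · simp [h1, h2]
  intro p hp q hq
  rcases hp with rfl | rfl | rfl <;> rcases hq with rfl | rfl | rfl <;> simp_all

lemma cbs_p4 {G : SimpleGraph V} {S : Set V} (hS : IsCompleteBipartiteSet G S)
    {a b c d : V} (ha : a ∈ S) (hb : b ∈ S) (hc : c ∈ S) (hd' : d ∈ S)
    (hab : G.Adj a b) (hbc : G.Adj b c) (hcd : G.Adj c d) : G.Adj a d := by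
  obtain ⟨X, Y, -, -, rfl, hd, hadj⟩ := hS
  have k1 := (hadj a ha b hb).mp hab
  have k2 := (hadj b hb c hc).mp hbc
  have k3 := (hadj c hc d hd').mp hcd
  have dj := Set.disjoint_left.mp hd
  have da := @dj a; have db := @dj b; have dc := @dj c; have dd := @dj d
  rw [hadj a ha d hd']
  tauto

lemma cbs_common {G : SimpleGraph V} {S : Set V} (hS : IsCompleteBipartiteSet G S)
    {a w : V} (ha : a ∈ S) (hw : w ∈ S) (hnot : ¬ G.Adj a w) :
    ∃ y ∈ S, G.Adj y a ∧ G.Adj y w := by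
  obtain ⟨X, Y, hX, hY, rfl, hd, hadj⟩ := hS
  rcases ha with ha | ha
  · have hw' : w ∈ X := by
      rcases hw with hw | hw
      · exact hw
      · exact absurd ((hadj a (Or.inl ha) w (Or.inr hw)).mpr (Or.inl ⟨ha, hw⟩)) hnot
    obtain ⟨y, hy⟩ := hY
    exact ⟨y, Or.inr hy, (hadj _ (Or.inr hy) _ (Or.inl ha)).mpr (Or.inr ⟨hy, ha⟩),
      (hadj _ (Or.inr hy) _ (Or.inl hw')).mpr (Or.inr ⟨hy, hw'⟩)⟩
  · have hw' : w ∈ Y := by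
      rcases hw with hw | hw
      · exact absurd ((hadj a (Or.inr ha) w (Or.inl hw)).mpr (Or.inr ⟨ha, hw⟩)) hnot
      · exact hw
    obtain ⟨y, hy⟩ := hX
    exact ⟨y, Or.inl hy, (hadj _ (Or.inl hy) _ (Or.inr ha)).mpr (Or.inl ⟨hy, ha⟩),
      (hadj _ (Or.inl hy) _ (Or.inr hw')).mpr (Or.inl ⟨hy, hw'⟩)⟩

/-- In a finite graph, every complete bipartite set extends to a biclique. -/
lemma exists_biclique_superset [Finite V] (G : SimpleGraph V) {S : Set V}
    (hS : IsCompleteBipartiteSet G S) :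
    ∃ T : Set V, S ⊆ T ∧ IsBiclique G T := by
  classical
  have hfin : ({T : Set V | IsCompleteBipartiteSet G T ∧ S ⊆ T}).Finite := Set.toFinite _
  have hne : ({T : Set V | IsCompleteBipartiteSet G T ∧ S ⊆ T}).Nonempty :=
    ⟨S, hS, subset_rfl⟩
  obtain ⟨T, hT, hmax⟩ := Set.Finite.exists_maximalFor id _ hfin hne
  refine ⟨T, hT.2, hT.1, ?_⟩
  intro T' hT' hTT'
  exact Set.Subset.antisymm (hmax ⟨hT', hT.2.trans hTT'⟩ hTT') hTT'

lemma finish_aux [Finite V] {G : SimpleGraph V} {B B' B₁ : Set V} (hdisj : Disjoint B B')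
    (S : Set V) (hS : IsCompleteBipartiteSet G S) (x y z t : V)
    (hxS : x ∈ S) (hxB : x ∈ B) (hyS : y ∈ S) (hyB' : y ∈ B') (hzS : z ∈ S) (hzB₁ : z ∈ B₁)
    (htS : t ∈ S) (htB₁ : t ∉ B₁) :
    ∃ B₂ : Set V, IsBiclique G B₂ ∧ B₂ ≠ B ∧ B₂ ≠ B' ∧ B₂ ≠ B₁ ∧
      (B₂ ∩ B).Nonempty ∧ (B₂ ∩ B').Nonempty ∧ (B₂ ∩ B₁).Nonempty := by
  obtain ⟨T, hST, hT⟩ := exists_biclique_superset G hS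
  refine ⟨T, hT, ?_, ?_, ?_, ⟨x, hST hxS, hxB⟩, ⟨y, hST hyS, hyB'⟩, ⟨z, hST hzS, hzB₁⟩⟩
  · rintro rfl; exact Set.disjoint_left.mp hdisj (hST hyS) hyB'
  · rintro rfl; exact Set.disjoint_left.mp hdisj hxB (hST hxS)
  · rintro rfl; exact htB₁ (hST htS)

/-- If `B, B'` are disjoint bicliques of a connected graph `G` joined by an edge `uv`
(`u ∈ B`, `v ∈ B'`), and `B₁` is a biclique containing both `u` and `v`, then there is
a biclique `B₂`, different from `B`, `B'` and `B₁`, intersecting each of `B`, `B'`, `B₁`. -/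
theorem exists_fourth_biclique
    {V : Type*} [Fintype V] (G : SimpleGraph V) (hG : G.Connected)
    (B B' : Set V) (hB : IsBiclique G B) (hB' : IsBiclique G B')
    (hdisj : Disjoint B B') (u v : V) (hu : u ∈ B) (hv : v ∈ B') (huv : G.Adj u v)
    (B₁ : Set V) (hB₁ : IsBiclique G B₁) (huB₁ : u ∈ B₁) (hvB₁ : v ∈ B₁) :
    ∃ B₂ : Set V, IsBiclique G B₂ ∧ B₂ ≠ B ∧ B₂ ≠ B' ∧ B₂ ≠ B₁ ∧
      (B₂ ∩ B).Nonempty ∧ (B₂ ∩ B').Nonempty ∧ (B₂ ∩ B₁).Nonempty := by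
  -- `v ∉ B` by disjointness
  have hvB : v ∉ B := fun h => Set.disjoint_left.mp hdisj h hv
  -- `B` is not contained in `B₁`, else maximality of `B` gives `B₁ = B ∋ v`
  have hnotsub : ¬ B ⊆ B₁ := by
    intro h
    have := hB.2 B₁ hB₁.1 h
    exact hvB (this ▸ hvB₁)
  obtain ⟨w, hwB, hwB₁⟩ := Set.not_subset.mp hnotsub
  have huB' : u ∉ B' := fun h => Set.disjoint_left.mp hdisj hu h
  have hnotsub' : ¬ B' ⊆ B₁ := fun h => huB' (hB'.2 B₁ hB₁.1 h ▸ huB₁)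
  obtain ⟨w', hw'B', hw'B₁⟩ := Set.not_subset.mp hnotsub'
  by_cases h1 : G.Adj w v
  · exact finish_aux hdisj _ (cbs_pair G h1) w v v w (by simp) hwB (by simp) hv (by simp) hvB₁
      (by simp) hwB₁
  by_cases h2 : G.Adj u w'
  · exact finish_aux hdisj _ (cbs_pair G h2) u w' u w' (by simp) hu (by simp) hw'B' (by simp)
      huB₁ (by simp) hw'B₁
  by_cases h3 : G.Adj u w
  · exact finish_aux hdisj _ (cbs_triple G huv h3 (fun h => h1 h.symm)) u v u w (by simp) hu
      (by simp) hv (by simp) huB₁ (by simp) hwB₁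
  by_cases h4 : G.Adj v w'
  · exact finish_aux hdisj _ (cbs_triple G huv.symm h4 h2) u w' v w' (by simp) hu
      (by simp) hw'B' (by simp) hvB₁ (by simp) hw'B₁
  obtain ⟨y, hyB, hyu, hyw⟩ := cbs_common hB.1 hu hwB h3
  by_cases hyB₁ : y ∈ B₁
  swap
  · by_cases h5 : G.Adj y v
    · exact finish_aux hdisj _ (cbs_pair G h5) y v v y (by simp) hyB (by simp) hv (by simp)
        hvB₁ (by simp) hyB₁
    · exact finish_aux hdisj _ (cbs_triple G hyu.symm huv h5) u v u y (by simp) hu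
        (by simp) hv (by simp) huB₁ (by simp) hyB₁
  obtain ⟨y', hy'B', hy'v, hy'w'⟩ := cbs_common hB'.1 hv hw'B' h4
  by_cases hy'B₁ : y' ∈ B₁
  swap
  · by_cases h6 : G.Adj u y'
    · exact finish_aux hdisj _ (cbs_pair G h6) u y' u y' (by simp) hu (by simp) hy'B'
        (by simp) huB₁ (by simp) hy'B₁
    · exact finish_aux hdisj _ (cbs_triple G huv.symm hy'v.symm h6) u y' v y' (by simp) hu
        (by simp) hy'B' (by simp) hvB₁ (by simp) hy'B₁
  have hyy' : G.Adj y y' := cbs_p4 hB₁.1 hyB₁ huB₁ hvB₁ hy'B₁ hyu huv hy'v.symm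
  by_cases h7 : G.Adj w y'
  · exact finish_aux hdisj _ (cbs_pair G h7) w y' y' w (by simp) hwB (by simp) hy'B'
      (by simp) hy'B₁ (by simp) hwB₁
  · exact finish_aux hdisj _ (cbs_triple G hyw hyy' h7) y y' y w (by simp) hyB
      (by simp) hy'B' (by simp) hyB₁ (by simp) hwB₁
end

section
/- The 3-sun (rising sun variant: the complement-free sun on 6 vertices where each pair of inner triangle vertices shares an outer degree-2 vertex) — equivalently the Hajós configuration — if a graph G contains the Hajós graph as an induced subgraph such that the three vertices of degree two in the subgraph also have degree two in G, then G is not a biclique graph. -/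
open SimpleGraph

variable {V : Type*}

/-- The diamond: `K4` minus an edge (the edge between vertices 2 and 3 is missing). -/
def diamondGraph : SimpleGraph (Fin 4) :=
  SimpleGraph.fromEdgeSet {s(0, 1), s(0, 2), s(0, 3), s(1, 2), s(1, 3)}

/-- The Hajós graph: a triangle `0,1,2` plus vertices `3,4,5`, where `3` is adjacent
to exactly `0,1`, `4` to exactly `1,2`, and `5` to exactly `2,0`. -/
def hajosGraph : SimpleGraph (Fin 6) :=
  SimpleGraph.fromEdgeSet
    {s(0, 1), s(1, 2), s(0, 2), s(3, 0), s(3, 1), s(4, 1), s(4, 2), s(5, 2), s(5, 0)}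

lemma cb_parts {W : Type} {H : SimpleGraph W} {S : Set W} (hS : IsCompleteBipartiteSet H S) :
    ∃ X Y : Set W, X.Nonempty ∧ Y.Nonempty ∧ X ⊆ S ∧ Y ⊆ S ∧
      (∀ a ∈ S, (a ∈ X ∧ a ∉ Y) ∨ (a ∈ Y ∧ a ∉ X)) ∧
      ∀ a ∈ S, ∀ b ∈ S, (H.Adj a b ↔ ((a ∈ X ∧ b ∈ Y) ∨ (a ∈ Y ∧ b ∈ X))) := by
  obtain ⟨X, Y, hX, hY, hSXY, hd, hadj⟩ := hS
  refine ⟨X, Y, hX, hY, by rw [hSXY]; exact Set.subset_union_left,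
    by rw [hSXY]; exact Set.subset_union_right, ?_, hadj⟩
  intro a ha
  rw [hSXY] at ha
  rcases ha with h | h
  · exact Or.inl ⟨h, Set.disjoint_left.mp hd h⟩
  · exact Or.inr ⟨h, Set.disjoint_right.mp hd h⟩

lemma cb_triangle {W : Type} {H : SimpleGraph W} {S : Set W} (hS : IsCompleteBipartiteSet H S)
    {a b c : W} (ha : a ∈ S) (hb : b ∈ S) (hc : c ∈ S)
    (hab : H.Adj a b) (hbc : H.Adj b c) (hac : H.Adj a c) : False := by
  obtain ⟨X, Y, -, -, -, -, hp, hadj⟩ := cb_parts hS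
  rw [hadj a ha b hb] at hab
  rw [hadj b hb c hc] at hbc
  rw [hadj a ha c hc] at hac
  rcases hp a ha with h1 | h1 <;> rcases hp b hb with h2 | h2 <;>
    rcases hp c hc with h3 | h3 <;> tauto

lemma cb_path {W : Type} {H : SimpleGraph W} {S : Set W} (hS : IsCompleteBipartiteSet H S)
    {a b c d : W} (ha : a ∈ S) (hb : b ∈ S) (hc : c ∈ S) (hd : d ∈ S)
    (hab : H.Adj a b) (hbc : H.Adj b c) (hcd : H.Adj c d) : H.Adj a d := by
  obtain ⟨X, Y, -, -, -, -, hp, hadj⟩ := cb_parts hS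
  rw [hadj a ha b hb] at hab
  rw [hadj b hb c hc] at hbc
  rw [hadj c hc d hd] at hcd
  rw [hadj a ha d hd]
  rcases hp a ha with h1 | h1 <;> rcases hp b hb with h2 | h2 <;>
    rcases hp c hc with h3 | h3 <;> rcases hp d hd with h4 | h4 <;> tauto

lemma cb_split {W : Type} {H : SimpleGraph W} {S : Set W} (hS : IsCompleteBipartiteSet H S)
    {a b d : W} (ha : a ∈ S) (hb : b ∈ S) (hd : d ∈ S)
    (hab : H.Adj a b) : H.Adj d a ∨ H.Adj d b := by
  obtain ⟨X, Y, -, -, -, -, hp, hadj⟩ := cb_parts hS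
  rw [hadj a ha b hb] at hab
  rw [hadj d hd a ha, hadj d hd b hb]
  rcases hp a ha with h1 | h1 <;> rcases hp b hb with h2 | h2 <;>
    rcases hp d hd with h3 | h3 <;> tauto

lemma cb_common {W : Type} {H : SimpleGraph W} {S : Set W} (hS : IsCompleteBipartiteSet H S)
    {x y : W} (hx : x ∈ S) (hy : y ∈ S) (hxy : ¬ H.Adj x y) :
    ∃ z ∈ S, H.Adj z x ∧ H.Adj z y := by
  obtain ⟨X, Y, hX, hY, hXS, hYS, hp, hadj⟩ := cb_parts hS
  rw [hadj x hx y hy] at hxy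
  rcases hp x hx with h1 | h1
  · obtain ⟨z, hz⟩ := hY
    refine ⟨z, hYS hz, ?_, ?_⟩
    · rw [hadj z (hYS hz) x hx]; tauto
    · rw [hadj z (hYS hz) y hy]; rcases hp y hy with h2 | h2 <;> tauto
  · obtain ⟨z, hz⟩ := hX
    refine ⟨z, hXS hz, ?_, ?_⟩
    · rw [hadj z (hXS hz) x hx]; tauto
    · rw [hadj z (hXS hz) y hy]; rcases hp y hy with h2 | h2 <;> tauto

lemma cb_nbr {W : Type} {H : SimpleGraph W} {S : Set W} (hS : IsCompleteBipartiteSet H S)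
    {x : W} (hx : x ∈ S) : ∃ z ∈ S, H.Adj z x := by
  obtain ⟨z, hz, h1, -⟩ := cb_common hS hx hx (H.irrefl)
  exact ⟨z, hz, h1⟩

/-- A star with center `x` and non-adjacent leaves `p, q` is a complete bipartite set. -/
lemma star_cb {W : Type} (H : SimpleGraph W) {x p q : W} (hp : H.Adj x p) (hq : H.Adj x q)
    (hpq : ¬ H.Adj p q) : IsCompleteBipartiteSet H {x, p, q} := by
  have hxp : x ≠ p := hp.ne
  have hxq : x ≠ q := hq.ne
  have hqp : ¬ H.Adj q p := fun h => hpq h.symm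
  refine ⟨{x}, {p, q}, Set.singleton_nonempty x, Set.insert_nonempty p {q},
    by rw [Set.singleton_union], Set.disjoint_singleton_left.mpr (by simp [hxp, hxq]), ?_⟩
  intro a ha b hb
  simp only [Set.mem_insert_iff, Set.mem_singleton_iff] at ha hb ⊢
  rcases ha with rfl | rfl | rfl <;> rcases hb with rfl | rfl | rfl <;>
    simp [hxp, hxq, hxp.symm, hxq.symm, hp, hq, hpq, hqp, hp.symm, hq.symm]

/-- Every complete bipartite set extends to a biclique (finite graphs). -/
lemma exists_biclique_superset_s12 {W : Type} [Fintype W] (H : SimpleGraph W) {S : Set W}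
    (hS : IsCompleteBipartiteSet H S) : ∃ B, IsBiclique H B ∧ S ⊆ B := by
  obtain ⟨B, hB, hmax⟩ := Set.Finite.exists_maximalFor (id : Set W → Set W)
    {T | IsCompleteBipartiteSet H T ∧ S ⊆ T} (Set.toFinite _) ⟨S, hS, subset_rfl⟩
  exact ⟨B, ⟨hB.1, fun T hT hBT => Set.Subset.antisymm (hmax ⟨hT, hB.2.trans hBT⟩ hBT) hBT⟩, hB.2⟩


lemma no_edge_of_sub {W : Type} {H : SimpleGraph W} {A C B : Set W}
    (hA : IsCompleteBipartiteSet H A) (hC : IsCompleteBipartiteSet H C)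
    (hB : IsCompleteBipartiteSet H B) (hAB : ¬ A ⊆ B) (hCB : ¬ C ⊆ B)
    (hF : ∀ K, IsCompleteBipartiteSet H K → (∃ x ∈ K, x ∈ A) → (∃ y ∈ K, y ∈ C) → K ⊆ B) :
    ∀ a ∈ A, ∀ c ∈ C, ¬ H.Adj a c := by
  intro a ha c hc hac
  have haB : a ∈ B := hF _ (star_cb H hac hac (H.irrefl)) ⟨a, by simp, ha⟩ ⟨c, by simp, hc⟩ (by simp)
  have hcB : c ∈ B := hF _ (star_cb H hac hac (H.irrefl)) ⟨a, by simp, ha⟩ ⟨c, by simp, hc⟩ (by simp)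
  obtain ⟨z, hzA, hzB⟩ := Set.not_subset.mp hAB
  have hzc : ∀ c' ∈ C, ¬ H.Adj z c' := fun c' hc' h =>
    hzB (hF _ (star_cb H h h (H.irrefl)) ⟨z, by simp, hzA⟩ ⟨c', by simp, hc'⟩ (by simp))
  have hza : ¬ H.Adj z a := fun h =>
    hzB (hF _ (star_cb H h.symm hac (hzc c hc)) ⟨z, by simp, hzA⟩ ⟨c, by simp, hc⟩ (by simp))
  obtain ⟨z', hz'A, hz'z, hz'a⟩ := cb_common hA hzA ha hza
  have hz'c : ¬ H.Adj z' c := fun h =>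
    hzB (hF _ (star_cb H hz'z h (hzc c hc)) ⟨z, by simp, hzA⟩ ⟨c, by simp, hc⟩ (by simp))
  have hz'B : z' ∈ B :=
    hF _ (star_cb H hz'a.symm hac hz'c) ⟨a, by simp, ha⟩ ⟨c, by simp, hc⟩ (by simp)
  obtain ⟨t, htC, htB⟩ := Set.not_subset.mp hCB
  have hta : ∀ a' ∈ A, ¬ H.Adj t a' := fun a' ha' h =>
    htB (hF _ (star_cb H h h (H.irrefl)) ⟨a', by simp, ha'⟩ ⟨t, by simp, htC⟩ (by simp))
  have htc : ¬ H.Adj t c := fun h =>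
    htB (hF _ (star_cb H h.symm hac.symm (hta a ha)) ⟨a, by simp, ha⟩ ⟨t, by simp, htC⟩ (by simp))
  obtain ⟨u', hu'C, hu't, hu'c⟩ := cb_common hC htC hc htc
  have hu'a : ¬ H.Adj u' a := fun h =>
    htB (hF _ (star_cb H hu't h (hta a ha)) ⟨a, by simp, ha⟩ ⟨t, by simp, htC⟩ (by simp))
  have hu'B : u' ∈ B :=
    hF _ (star_cb H hu'c.symm hac.symm hu'a) ⟨a, by simp, ha⟩ ⟨c, by simp, hc⟩ (by simp)
  have hz'u' : H.Adj z' u' := cb_path hB hz'B haB hcB hu'B hz'a hac hu'c.symm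
  exact hzB (hF _ (star_cb H hz'z hz'u' (hzc u' hu'C)) ⟨z, by simp, hzA⟩ ⟨u', by simp, hu'C⟩ (by simp))

/-- If a graph `G` contains the Hajós graph as an induced subgraph (given by a graph
embedding `f`) such that the three degree-two vertices of the Hajós graph (`3, 4, 5`)
also have degree two in `G`, then `G` is not a biclique graph. -/
theorem hajos_induced_not_biclique_graph
    {V : Type*} [Fintype V] (G : SimpleGraph V) [DecidableRel G.Adj]
    (f : hajosGraph ↪g G)
    (hdeg : ∀ i : Fin 6, i = 3 ∨ i = 4 ∨ i = 5 → G.degree (f i) = 2) :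
    ¬ ∃ (W : Type) (_ : Fintype W) (H : SimpleGraph W), Nonempty (G ≃g KB H) := by
  classical
  rintro ⟨W, _, H, ⟨φ⟩⟩
  have h30 : hajosGraph.Adj 3 0 := by
    simp [hajosGraph, SimpleGraph.fromEdgeSet_adj, Set.mem_insert_iff, Set.mem_singleton_iff,
      Sym2.eq_iff]
  have h31 : hajosGraph.Adj 3 1 := by
    simp [hajosGraph, SimpleGraph.fromEdgeSet_adj, Set.mem_insert_iff, Set.mem_singleton_iff,
      Sym2.eq_iff]
  have h41 : hajosGraph.Adj 4 1 := by
    simp [hajosGraph, SimpleGraph.fromEdgeSet_adj, Set.mem_insert_iff, Set.mem_singleton_iff,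
      Sym2.eq_iff]
  have h42 : hajosGraph.Adj 4 2 := by
    simp [hajosGraph, SimpleGraph.fromEdgeSet_adj, Set.mem_insert_iff, Set.mem_singleton_iff,
      Sym2.eq_iff]
  have h34 : ¬ hajosGraph.Adj 3 4 := by
    simp [hajosGraph, SimpleGraph.fromEdgeSet_adj, Set.mem_insert_iff, Set.mem_singleton_iff,
      Sym2.eq_iff]
  -- the six bicliques
  set b : Fin 6 → {S : Set W // IsBiclique H S} := fun i => φ (f i) with hbdef
  have hinj : Function.Injective b := by
    intro i j hij
    exact f.injective (φ.injective hij)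
  have hKB : ∀ i j : Fin 6, (KB H).Adj (b i) (b j) ↔ hajosGraph.Adj i j := by
    intro i j
    rw [hbdef]
    simp only
    rw [φ.map_adj_iff, f.map_adj_iff]
  -- G-neighbors of f 3 are exactly f 0, f 1
  have hnbr3 : ∀ x : V, G.Adj (f 3) x → x = f 0 ∨ x = f 1 := by
    intro x hx
    have h2 : G.degree (f 3) = 2 := hdeg 3 (Or.inl rfl)
    have hne01 : f 0 ≠ f 1 := fun e => absurd (f.injective e) (by decide)
    have hss : ({f 0, f 1} : Finset V) ⊆ G.neighborFinset (f 3) := by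
      intro y hy
      rcases Finset.mem_insert.mp hy with rfl | hy
      · exact (SimpleGraph.mem_neighborFinset _ _ _).mpr ((f.map_adj_iff).mpr h30)
      · rw [Finset.mem_singleton] at hy
        subst hy
        exact (SimpleGraph.mem_neighborFinset _ _ _).mpr ((f.map_adj_iff).mpr h31)
    have heq : ({f 0, f 1} : Finset V) = G.neighborFinset (f 3) := by
      apply Finset.eq_of_subset_of_card_le hss
      rw [Finset.card_pair hne01, SimpleGraph.card_neighborFinset_eq_degree, h2]
    have : x ∈ ({f 0, f 1} : Finset V) := by
      rw [heq]
      exact (SimpleGraph.mem_neighborFinset _ _ _).mpr hx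
    rcases Finset.mem_insert.mp this with h | h
    · exact Or.inl h
    · exact Or.inr (Finset.mem_singleton.mp h)
  have hnbr4 : ∀ x : V, G.Adj (f 4) x → x = f 1 ∨ x = f 2 := by
    intro x hx
    have h2 : G.degree (f 4) = 2 := hdeg 4 (Or.inr (Or.inl rfl))
    have hne12 : f 1 ≠ f 2 := fun e => absurd (f.injective e) (by decide)
    have hss : ({f 1, f 2} : Finset V) ⊆ G.neighborFinset (f 4) := by
      intro y hy
      rcases Finset.mem_insert.mp hy with rfl | hy
      · exact (SimpleGraph.mem_neighborFinset _ _ _).mpr ((f.map_adj_iff).mpr h41)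
      · rw [Finset.mem_singleton] at hy
        subst hy
        exact (SimpleGraph.mem_neighborFinset _ _ _).mpr ((f.map_adj_iff).mpr h42)
    have heq : ({f 1, f 2} : Finset V) = G.neighborFinset (f 4) := by
      apply Finset.eq_of_subset_of_card_le hss
      rw [Finset.card_pair hne12, SimpleGraph.card_neighborFinset_eq_degree, h2]
    have : x ∈ ({f 1, f 2} : Finset V) := by
      rw [heq]
      exact (SimpleGraph.mem_neighborFinset _ _ _).mpr hx
    rcases Finset.mem_insert.mp this with h | h
    · exact Or.inl h
    · exact Or.inr (Finset.mem_singleton.mp h)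
  -- KB-neighbors of b 3 are b 0 or b 1
  have hB3 : ∀ S : {S : Set W // IsBiclique H S}, (KB H).Adj (b 3) S → S = b 0 ∨ S = b 1 := by
    intro S hS
    have hGadj : G.Adj (f 3) (φ.symm S) := by
      have h1 : (KB H).Adj (b 3) (φ (φ.symm S)) := by
        rwa [RelIso.apply_symm_apply]
      exact (φ.map_adj_iff).mp h1
    rcases hnbr3 _ hGadj with h | h
    · left
      rw [hbdef]
      simp only
      rw [← h, RelIso.apply_symm_apply]
    · right
      rw [hbdef]
      simp only
      rw [← h, RelIso.apply_symm_apply]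
  have hB4 : ∀ S : {S : Set W // IsBiclique H S}, (KB H).Adj (b 4) S → S = b 1 ∨ S = b 2 := by
    intro S hS
    have hGadj : G.Adj (f 4) (φ.symm S) := by
      have h1 : (KB H).Adj (b 4) (φ (φ.symm S)) := by
        rwa [RelIso.apply_symm_apply]
      exact (φ.map_adj_iff).mp h1
    rcases hnbr4 _ hGadj with h | h
    · left
      rw [hbdef]
      simp only
      rw [← h, RelIso.apply_symm_apply]
    · right
      rw [hbdef]
      simp only
      rw [← h, RelIso.apply_symm_apply]
  have h50 : hajosGraph.Adj 5 0 := by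
    simp [hajosGraph, SimpleGraph.fromEdgeSet_adj, Set.mem_insert_iff, Set.mem_singleton_iff,
      Sym2.eq_iff]
  have h52 : hajosGraph.Adj 5 2 := by
    simp [hajosGraph, SimpleGraph.fromEdgeSet_adj, Set.mem_insert_iff, Set.mem_singleton_iff,
      Sym2.eq_iff]
  have h53 : ¬ hajosGraph.Adj 5 3 := by
    simp [hajosGraph, SimpleGraph.fromEdgeSet_adj, Set.mem_insert_iff, Set.mem_singleton_iff,
      Sym2.eq_iff]
  have hnbr5 : ∀ x : V, G.Adj (f 5) x → x = f 2 ∨ x = f 0 := by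
    intro x hx
    have h2 : G.degree (f 5) = 2 := hdeg 5 (Or.inr (Or.inr rfl))
    have hne20 : f 2 ≠ f 0 := fun e => absurd (f.injective e) (by decide)
    have hss : ({f 2, f 0} : Finset V) ⊆ G.neighborFinset (f 5) := by
      intro y hy
      rcases Finset.mem_insert.mp hy with rfl | hy
      · exact (SimpleGraph.mem_neighborFinset _ _ _).mpr ((f.map_adj_iff).mpr h52)
      · rw [Finset.mem_singleton] at hy
        subst hy
        exact (SimpleGraph.mem_neighborFinset _ _ _).mpr ((f.map_adj_iff).mpr h50)
    have heq : ({f 2, f 0} : Finset V) = G.neighborFinset (f 5) := by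
      apply Finset.eq_of_subset_of_card_le hss
      rw [Finset.card_pair hne20, SimpleGraph.card_neighborFinset_eq_degree, h2]
    have : x ∈ ({f 2, f 0} : Finset V) := by
      rw [heq]
      exact (SimpleGraph.mem_neighborFinset _ _ _).mpr hx
    rcases Finset.mem_insert.mp this with h | h
    · exact Or.inl h
    · exact Or.inr (Finset.mem_singleton.mp h)
  have hB5 : ∀ S : {S : Set W // IsBiclique H S}, (KB H).Adj (b 5) S → S = b 2 ∨ S = b 0 := by
    intro S hS
    have hGadj : G.Adj (f 5) (φ.symm S) := by
      have h1 : (KB H).Adj (b 5) (φ (φ.symm S)) := by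
        rwa [RelIso.apply_symm_apply]
      exact (φ.map_adj_iff).mp h1
    rcases hnbr5 _ hGadj with h | h
    · left
      rw [hbdef]
      simp only
      rw [← h, RelIso.apply_symm_apply]
    · right
      rw [hbdef]
      simp only
      rw [← h, RelIso.apply_symm_apply]
  -- b 3 and b 4 are disjoint
  have hdisj : ∀ x : W, x ∈ (b 3).1 → x ∈ (b 4).1 → False := by
    intro x h3 h4
    have hne : b 3 ≠ b 4 := fun e => absurd (hinj e) (by decide)
    have : (KB H).Adj (b 3) (b 4) := ⟨hne, ⟨x, h3, h4⟩⟩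
    exact h34 ((hKB 3 4).mp this)
  have hdisj53 : ∀ x : W, x ∈ (b 5).1 → x ∈ (b 3).1 → False := by
    intro x h5 h3
    have hne : b 5 ≠ b 3 := fun e => absurd (hinj e) (by decide)
    have : (KB H).Adj (b 5) (b 3) := ⟨hne, ⟨x, h5, h3⟩⟩
    exact h53 ((hKB 5 3).mp this)
  have hFgen : ∀ i j k l m : Fin 6, (∀ x : W, x ∈ (b i).1 → x ∈ (b j).1 → False) →
      (∀ S, (KB H).Adj (b i) S → S = b l ∨ S = b k) →
      (∀ S, (KB H).Adj (b j) S → S = b k ∨ S = b m) → l ≠ k → l ≠ m →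
      ∀ K, IsCompleteBipartiteSet H K → (∃ x ∈ K, x ∈ (b i).1) → (∃ y ∈ K, y ∈ (b j).1) →
        K ⊆ (b k).1 := by
    intro i j k l m hdij hi hj hlk hlm K hK ⟨x, hxK, hxi⟩ ⟨y, hyK, hyj⟩
    obtain ⟨S, hS, hKS⟩ := exists_biclique_superset_s12 H hK
    have hTi : (KB H).Adj (b i) ⟨S, hS⟩ :=
      ⟨fun e => hdij y (by rw [e]; exact hKS hyK) hyj, ⟨x, hxi, hKS hxK⟩⟩
    have hTj : (KB H).Adj (b j) ⟨S, hS⟩ :=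
      ⟨fun e => hdij x hxi (by rw [e]; exact hKS hxK), ⟨y, hyj, hKS hyK⟩⟩
    rcases hi _ hTi with h1 | h1
    · rcases hj _ hTj with h2 | h2
      · exact absurd (hinj (h1.symm.trans h2)) hlk
      · exact absurd (hinj (h1.symm.trans h2)) hlm
    · intro z hz
      rw [← h1]
      exact hKS hz
  have hns : ∀ i k : Fin 6, i ≠ k → ¬ (b i).1 ⊆ (b k).1 := fun i k hik hsub =>
    hik (hinj (Subtype.ext ((b i).2.2 (b k).1 (b k).2.1 hsub))).symm
  have hF34 := hFgen 3 4 1 0 2 hdisj hB3 hB4 (by decide) (by decide)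
  have hE34 := no_edge_of_sub (b 3).2.1 (b 4).2.1 (b 1).2.1 (hns 3 1 (by decide))
    (hns 4 1 (by decide)) hF34
  have hE53 := no_edge_of_sub (b 5).2.1 (b 3).2.1 (b 0).2.1 (hns 5 0 (by decide))
    (hns 3 0 (by decide)) (hFgen 5 3 0 2 1 hdisj53 hB5 hB3 (by decide) (by decide))
  -- pick u ∈ b 4 ∩ b 1
  obtain ⟨u, hu4, hu1⟩ : ∃ u, u ∈ (b 4).1 ∧ u ∈ (b 1).1 := by
    have : (KB H).Adj (b 4) (b 1) := (hKB 4 1).mpr h41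
    obtain ⟨x, hx⟩ := this.2
    exact ⟨x, hx.1, hx.2⟩
  obtain ⟨w, hw3, hw1⟩ : ∃ w, w ∈ (b 3).1 ∧ w ∈ (b 1).1 := by
    obtain ⟨x, hx⟩ := ((hKB 3 1).mpr h31).2
    exact ⟨x, hx.1, hx.2⟩
  obtain ⟨d, hd5, hd0⟩ : ∃ d, d ∈ (b 5).1 ∧ d ∈ (b 0).1 := by
    obtain ⟨x, hx⟩ := ((hKB 5 0).mpr h50).2
    exact ⟨x, hx.1, hx.2⟩
  obtain ⟨y, hy1, hyw, hyu⟩ := cb_common (b 1).2.1 hw1 hu1 (hE34 w hw3 u hu4)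
  obtain ⟨z, hz3, hzw⟩ := cb_nbr (b 3).2.1 hw3
  have hzy : ¬ H.Adj z y := by
    intro h
    have hz1 : z ∈ (b 1).1 := hF34 _ (star_cb H h.symm hyu (hE34 z hz3 u hu4))
      ⟨z, by simp, hz3⟩ ⟨u, by simp, hu4⟩ (by simp)
    exact cb_triangle (b 1).2.1 hz1 hy1 hw1 h hyw hzw
  obtain ⟨S, hS, hKS⟩ := exists_biclique_superset_s12 H (star_cb H hzw.symm hyw.symm hzy)
  have hyS : y ∈ S := hKS (by simp)
  have hwS : w ∈ S := hKS (by simp)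
  have hzS : z ∈ S := hKS (by simp)
  have hT3 : (KB H).Adj (b 3) ⟨S, hS⟩ :=
    ⟨fun e => hE34 y (by rw [e]; exact hyS) u hu4 hyu, ⟨w, hw3, hwS⟩⟩
  rcases hB3 _ hT3 with h0 | h1
  · have hw0 : w ∈ (b 0).1 := by rw [← h0]; exact hwS
    have hz0 : z ∈ (b 0).1 := by rw [← h0]; exact hzS
    rcases cb_split (b 0).2.1 hw0 hz0 hd0 hzw.symm with h | h
    · exact hE53 d hd5 w hw3 h
    · exact hE53 d hd5 z hz3 h
  · have hz1 : z ∈ (b 1).1 := by rw [← h1]; exact hzS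
    exact hE34 z hz3 u hu4 (cb_path (b 1).2.1 hz1 hw1 hy1 hu1 hzw hyw.symm hyu)
end
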